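/- arXiv:1901.03218 — 3 statements merged into one kernel-verified Lean document; each statement's English description precedes it below -/
import Mathlib

section
/- If G and H are graphs with no isolated vertices and the direct product G × H is well-covered, then α(G)·n(H) = α(H)·n(G); that is, G and H have the same independence ratio. -/
/-- The direct (tensor) product of two simple graphs. -/
def directProd {V W : Type*} (G : SimpleGraph V) (H : SimpleGraph W) :
    SimpleGraph (V × W) where
  Adj x y := G.Adj x.1 y.1 ∧ H.Adj x.2 y.2
  symm := ⟨fun x y h => ⟨h.1.symm, h.2.symm⟩⟩
  loopless := ⟨fun x h => G.loopless.irrefl x.1 h.1⟩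

/-- `s` is an independent set of `G`. -/
def IsIndep {V : Type*} (G : SimpleGraph V) (s : Set V) : Prop :=
  ∀ ⦃u⦄, u ∈ s → ∀ ⦃v⦄, v ∈ s → ¬ G.Adj u v

/-- `s` is a maximal independent set of `G`. -/
def IsMaxIndep {V : Type*} (G : SimpleGraph V) (s : Set V) : Prop :=
  IsIndep G s ∧ ∀ t, IsIndep G t → s ⊆ t → s = t

/-- A graph is well-covered if all maximal independent sets have the same cardinality. -/
def WellCovered {V : Type*} (G : SimpleGraph V) : Prop :=
  ∀ s t, IsMaxIndep G s → IsMaxIndep G t → s.ncard = t.ncard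

/-- The independence number of `G`. -/
noncomputable def indepNum {V : Type*} (G : SimpleGraph V) : ℕ :=
  sSup {n | ∃ s, IsIndep G s ∧ s.ncard = n}

/-- The independent domination number of `G`: the minimum size of a maximal independent set. -/
noncomputable def iNum {V : Type*} (G : SimpleGraph V) : ℕ :=
  sInf {n | ∃ s, IsMaxIndep G s ∧ s.ncard = n}

/-- The closed neighborhood `N[s]` of a set of vertices. -/
def closedNbhd {V : Type*} (G : SimpleGraph V) (s : Set V) : Set V :=
  s ∪ {v | ∃ u ∈ s, G.Adj u v}

/-- `G` has no isolated vertices. -/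
def NoIsolated {V : Type*} (G : SimpleGraph V) : Prop := ∀ v, ∃ u, G.Adj v u

/-- A vertex `v` is isolatable if some independent set `I` leaves `v` isolated in `G - N[I]`. -/
def Isolatable {V : Type*} (G : SimpleGraph V) (v : V) : Prop :=
  ∃ I : Set V, IsIndep G I ∧ v ∉ closedNbhd G I ∧ ∀ u ∉ closedNbhd G I, ¬ G.Adj v u

/-!
Extend a maximum independent set `A` of `G` to `A × W` and a maximum independent set `B` of `H`
to `V × B`. Both are maximal independent in `G × H`: a vertex `(v, w)` outside `A × W` has
`v` adjacent to some `a ∈ A`, and `w` adjacent to some `w'` because `H` has no isolated vertices,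
so `(v, w)` is adjacent to `(a, w') ∈ A × W`. Well-coveredness equates their sizes
`α(G) · n(H)` and `n(G) · α(H)`.
-/

section

variable {V W : Type*}

theorem IsIndep.isMaxIndep_of_forall_notMem {G : SimpleGraph V} {s : Set V}
    (hs : IsIndep G s) (hdom : ∀ v ∉ s, ∃ a ∈ s, G.Adj a v) : IsMaxIndep G s := by
  refine ⟨hs, fun t ht hst => hst.antisymm fun x hx => ?_⟩
  by_contra hxs
  obtain ⟨a, ha, hax⟩ := hdom x hxs
  exact ht (hst ha) hx hax

theorem IsMaxIndep.exists_adj_of_notMem {G : SimpleGraph V} {s : Set V} (hs : IsMaxIndep G s)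
    {v : V} (hv : v ∉ s) : ∃ a ∈ s, G.Adj a v := by
  by_contra! hc
  have hind : IsIndep G (insert v s) := by
    rintro u (rfl | hu) w (rfl | hw) huw
    · exact G.loopless.irrefl _ huw
    · exact hc w hw huw.symm
    · exact hc u hu huw
    · exact hs.1 hu hw huw
  exact hv (hs.2 _ hind (Set.subset_insert v s) ▸ Set.mem_insert v s)

theorem exists_isMaxIndep_ncard_eq_indepNum [Finite V] (G : SimpleGraph V) :
    ∃ s, IsMaxIndep G s ∧ s.ncard = indepNum G := by
  have hbdd : BddAbove {n | ∃ s, IsIndep G s ∧ s.ncard = n} := by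
    refine ⟨Nat.card V, ?_⟩
    rintro _ ⟨s, -, rfl⟩
    exact Set.ncard_le_card s
  have hne : {n | ∃ s, IsIndep G s ∧ s.ncard = n}.Nonempty :=
    ⟨0, ∅, fun _ hu => absurd hu (Set.notMem_empty _), Set.ncard_empty V⟩
  obtain ⟨s, hs, hcard⟩ := Nat.sSup_mem hne hbdd
  refine ⟨s, ⟨hs, fun t ht hst => ?_⟩, hcard⟩
  have hle : t.ncard ≤ indepNum G := le_csSup hbdd ⟨t, ht, rfl⟩
  exact Set.eq_of_subset_of_ncard_le hst (hcard ▸ hle) (Set.toFinite t)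

theorem IsMaxIndep.prod_univ {G : SimpleGraph V} (H : SimpleGraph W) (hH : NoIsolated H)
    {A : Set V} (hA : IsMaxIndep G A) : IsMaxIndep (directProd G H) (A ×ˢ Set.univ) := by
  refine IsIndep.isMaxIndep_of_forall_notMem (fun u hu v hv huv => hA.1 hu.1 hv.1 huv.1) ?_
  rintro ⟨v, w⟩ hvw
  obtain ⟨a, ha, hav⟩ := hA.exists_adj_of_notMem fun hv => hvw ⟨hv, Set.mem_univ w⟩
  obtain ⟨w', hww'⟩ := hH w
  exact ⟨(a, w'), ⟨ha, Set.mem_univ w'⟩, hav, hww'.symm⟩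

theorem IsMaxIndep.univ_prod (G : SimpleGraph V) {H : SimpleGraph W} (hG : NoIsolated G)
    {B : Set W} (hB : IsMaxIndep H B) : IsMaxIndep (directProd G H) (Set.univ ×ˢ B) := by
  refine IsIndep.isMaxIndep_of_forall_notMem (fun u hu v hv huv => hB.1 hu.2 hv.2 huv.2) ?_
  rintro ⟨v, w⟩ hvw
  obtain ⟨b, hb, hbw⟩ := hB.exists_adj_of_notMem fun hw => hvw ⟨Set.mem_univ v, hw⟩
  obtain ⟨v', hvv'⟩ := hG v
  exact ⟨(v', b), ⟨Set.mem_univ v', hb⟩, hvv'.symm, hbw⟩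

end

theorem stmt6 {V W : Type*} [Fintype V] [Fintype W] (G : SimpleGraph V) (H : SimpleGraph W)
    (hG : NoIsolated G) (hH : NoIsolated H)
    (hwc : WellCovered (directProd G H)) :
    indepNum G * Fintype.card W = indepNum H * Fintype.card V := by
  obtain ⟨A, hA, hAcard⟩ := exists_isMaxIndep_ncard_eq_indepNum G
  obtain ⟨B, hB, hBcard⟩ := exists_isMaxIndep_ncard_eq_indepNum H
  have h := hwc _ _ (hA.prod_univ H hH) (hB.univ_prod G hG)
  rw [Set.ncard_prod, Set.ncard_prod, Set.ncard_univ, Set.ncard_univ, hAcard, hBcard,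
    Nat.card_eq_fintype_card, Nat.card_eq_fintype_card] at h
  rw [h, mul_comm]
end

section
/- If G is a well-covered graph with no isolated vertices, then α(G) ≤ n(G)/2, where α(G) is the independence number and n(G) the order of G. -/
/-!
Induction on the number of vertices. Let `u` be a vertex of minimum degree and `C` its class of
twins (vertices with the same neighbourhood as `u`), an independent set with `N[C] = C ∪ N(u)`.
Well-coveredness gives `|C| ≤ |N(u)|`, by exchanging the part of a maximal independent set through
a neighbour of `u` lying in `N(u)` for `C`. The graph `G - N[C]` is again well-covered, since adding
`C` to any of its maximal independent sets gives one of `G`, and by the minimality of `deg u` it has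
no isolated vertex. Hence `α(G) = α(G - N[C]) + |C| ≤ (n - |C| - |N(u)|) / 2 + |C| ≤ n / 2`.
-/

section

open Set

variable {V : Type*} {G : SimpleGraph V} {R I K M s t : Set V} {u : V}

theorem IsIndep.mono (ht : IsIndep G t) (hst : s ⊆ t) : IsIndep G s :=
  fun _ ha _ hb => ht (hst ha) (hst hb)

theorem isIndep_empty : IsIndep G ∅ := fun _ h => h.elim

theorem isIndep_singleton (v : V) : IsIndep G {v} := by
  rintro _ rfl _ rfl h
  exact G.loopless.irrefl _ h

theorem IsIndep.union (hs : IsIndep G s) (ht : IsIndep G t)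
    (hst : ∀ a ∈ s, ∀ b ∈ t, ¬ G.Adj a b) : IsIndep G (s ∪ t) := by
  rintro a (ha | ha) b (hb | hb) hab
  exacts [hs ha hb hab, hst a ha b hb hab, hst b hb a ha hab.symm, ht ha hb hab]

theorem not_adj_of_notMem_closedNbhd {v w : V} (hv : v ∉ closedNbhd G I) (hw : w ∈ I) :
    ¬ G.Adj v w :=
  fun hvw => hv (Or.inr ⟨w, hw, hvw.symm⟩)

/-- Maximality among independent subsets of `R`: the subgraph induced on `R` is handled without
changing the vertex type. -/
def IsMaxIndepIn (G : SimpleGraph V) (R s : Set V) : Prop :=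
  Maximal (fun t => t ⊆ R ∧ IsIndep G t) s

def WellCoveredOn (G : SimpleGraph V) (R : Set V) : Prop :=
  ∀ s t, IsMaxIndepIn G R s → IsMaxIndepIn G R t → s.ncard = t.ncard

theorem isMaxIndepIn_univ_iff : IsMaxIndepIn G univ s ↔ IsMaxIndep G s := by
  simp only [IsMaxIndepIn, IsMaxIndep, Maximal, subset_univ, true_and]
  exact and_congr_right fun _ =>
    forall₂_congr fun t _ => ⟨fun h hst => hst.antisymm (h hst), fun h hst => (h hst).ge⟩

theorem IsMaxIndepIn.subset (hs : IsMaxIndepIn G R s) : s ⊆ R := hs.prop.1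

theorem IsMaxIndepIn.isIndep (hs : IsMaxIndepIn G R s) : IsIndep G s := hs.prop.2

theorem IsIndep.exists_isMaxIndepIn (hR : R.Finite) (hsR : s ⊆ R) (hs : IsIndep G s) :
    ∃ m, s ⊆ m ∧ IsMaxIndepIn G R m :=
  (hR.finite_subsets.subset fun _ ht => ht.1).exists_le_maximal ⟨hsR, hs⟩

theorem WellCoveredOn.ncard_le (hwc : WellCoveredOn G R) (hR : R.Finite) (htR : t ⊆ R)
    (ht : IsIndep G t) (hM : IsMaxIndepIn G R M) : t.ncard ≤ M.ncard := by
  obtain ⟨m, htm, hm⟩ := ht.exists_isMaxIndepIn hR htR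
  exact (ncard_le_ncard htm (hR.subset hm.subset)).trans (hwc m M hm hM).le

/-- Exchanging `M ∩ N[I]` for `I` keeps `M` independent. -/
theorem WellCoveredOn.ncard_le_ncard_inter_closedNbhd (hwc : WellCoveredOn G R)
    (hR : R.Finite) (hIR : I ⊆ R) (hI : IsIndep G I) (hM : IsMaxIndepIn G R M) :
    I.ncard ≤ (M ∩ closedNbhd G I).ncard := by
  have hMfin : M.Finite := hR.subset hM.subset
  have hdisj : Disjoint (M \ closedNbhd G I) I :=
    disjoint_left.2 fun _ hx hxI => hx.2 (Or.inl hxI)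
  have hindep : IsIndep G (M \ closedNbhd G I ∪ I) :=
    (hM.isIndep.mono sdiff_subset).union hI fun _ ha _ hb => not_adj_of_notMem_closedNbhd ha.2 hb
  have hle := hwc.ncard_le hR (union_subset (sdiff_subset.trans hM.subset) hIR) hindep hM
  rw [ncard_union_eq hdisj hMfin.sdiff (hR.subset hIR),
    ← ncard_inter_add_ncard_sdiff_eq_ncard M (closedNbhd G I) hMfin] at hle
  omega

theorem IsMaxIndepIn.union_of_diff_closedNbhd (hIR : I ⊆ R) (hI : IsIndep G I)
    (hK : IsMaxIndepIn G (R \ closedNbhd G I) K) : IsMaxIndepIn G R (K ∪ I) := by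
  have hKI : IsIndep G (K ∪ I) :=
    hK.isIndep.union hI fun _ ha _ hb => not_adj_of_notMem_closedNbhd (hK.subset ha).2 hb
  refine ⟨⟨union_subset (hK.subset.trans sdiff_subset) hIR, hKI⟩, ?_⟩
  rintro t ⟨htR, ht⟩ hKIt x hxt
  by_cases hxN : x ∈ closedNbhd G I
  · rcases hxN with hxI | ⟨w, hwI, hwx⟩
    · exact Or.inr hxI
    · exact absurd hwx (ht (hKIt (Or.inr hwI)) hxt)
  · have hins : insert x K ⊆ t := insert_subset hxt (subset_union_left.trans hKIt)
    exact Or.inl (hK.mem_of_prop_insert ⟨insert_subset ⟨htR hxt, hxN⟩ hK.subset, ht.mono hins⟩)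

theorem IsMaxIndepIn.ncard_union_of_diff_closedNbhd (hR : R.Finite) (hIR : I ⊆ R)
    (hK : IsMaxIndepIn G (R \ closedNbhd G I) K) : (K ∪ I).ncard = K.ncard + I.ncard :=
  ncard_union_eq (disjoint_left.2 fun _ hx hxI => (hK.subset hx).2 (Or.inl hxI))
    (hR.subset (hK.subset.trans sdiff_subset)) (hR.subset hIR)

theorem WellCoveredOn.diff_closedNbhd (hwc : WellCoveredOn G R) (hR : R.Finite) (hIR : I ⊆ R)
    (hI : IsIndep G I) : WellCoveredOn G (R \ closedNbhd G I) := by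
  intro K L hK hL
  have := hwc _ _ (hK.union_of_diff_closedNbhd hIR hI) (hL.union_of_diff_closedNbhd hIR hI)
  rw [hK.ncard_union_of_diff_closedNbhd hR hIR, hL.ncard_union_of_diff_closedNbhd hR hIR] at this
  omega

def twinsIn (G : SimpleGraph V) (R : Set V) (u : V) : Set V :=
  {w ∈ R | ∀ x ∈ R, G.Adj w x ↔ G.Adj u x}

theorem self_mem_twinsIn (hu : u ∈ R) : u ∈ twinsIn G R u :=
  ⟨hu, fun _ _ => Iff.rfl⟩

theorem isIndep_twinsIn : IsIndep G (twinsIn G R u) := fun _ ha _ hb hab =>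
  G.loopless.irrefl _ ((hb.2 _ hb.1).2 ((ha.2 _ hb.1).1 hab))

theorem disjoint_twinsIn_nbhd : Disjoint (twinsIn G R u) {x ∈ R | G.Adj u x} :=
  disjoint_left.2 fun _ hw hwu => G.loopless.irrefl _ ((hw.2 _ hw.1).2 hwu.2)

theorem inter_closedNbhd_twinsIn (hu : u ∈ R) :
    R ∩ closedNbhd G (twinsIn G R u) = twinsIn G R u ∪ {x ∈ R | G.Adj u x} := by
  ext x
  constructor
  · rintro ⟨hxR, hxC | ⟨w, hw, hwx⟩⟩
    · exact Or.inl hxC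
    · exact Or.inr ⟨hxR, (hw.2 x hxR).1 hwx⟩
  · rintro (hxC | ⟨hxR, hux⟩)
    · exact ⟨hxC.1, Or.inl hxC⟩
    · exact ⟨hxR, Or.inr ⟨u, self_mem_twinsIn hu, hux⟩⟩

theorem ncard_eq_ncard_diff_closedNbhd_twinsIn (hR : R.Finite) (hu : u ∈ R) :
    R.ncard = (R \ closedNbhd G (twinsIn G R u)).ncard + (twinsIn G R u).ncard
      + {x ∈ R | G.Adj u x}.ncard := by
  rw [← ncard_inter_add_ncard_sdiff_eq_ncard R _ hR, inter_closedNbhd_twinsIn hu,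
    ncard_union_eq disjoint_twinsIn_nbhd (hR.subset fun _ hx => hx.1)
      (hR.subset fun _ hx => hx.1)]
  ring

/-- A neighbour `y` of `u` is adjacent to every twin of `u`, so a maximal independent set through `y`
meets `N[twins]` only inside `N(u)`. -/
theorem WellCoveredOn.ncard_twinsIn_le (hwc : WellCoveredOn G R) (hR : R.Finite) (hu : u ∈ R)
    {y : V} (hy : y ∈ R) (huy : G.Adj u y) :
    (twinsIn G R u).ncard ≤ {x ∈ R | G.Adj u x}.ncard := by
  obtain ⟨M, hyM, hM⟩ := (isIndep_singleton y).exists_isMaxIndepIn hR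
    (singleton_subset_iff.2 hy)
  have hMN : M ∩ closedNbhd G (twinsIn G R u) ⊆ {x ∈ R | G.Adj u x} := by
    rintro x ⟨hxM, hxN⟩
    rcases (inter_closedNbhd_twinsIn hu).subset ⟨hM.subset hxM, hxN⟩ with hxC | hxu
    · exact absurd ((hxC.2 y hy).2 huy) (hM.isIndep hxM (hyM rfl))
    · exact hxu
  calc (twinsIn G R u).ncard
      ≤ (M ∩ closedNbhd G (twinsIn G R u)).ncard :=
        hwc.ncard_le_ncard_inter_closedNbhd hR (fun _ hw => hw.1) isIndep_twinsIn hM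
    _ ≤ {x ∈ R | G.Adj u x}.ncard := ncard_le_ncard hMN (hR.subset fun _ hx => hx.1)

theorem exists_adj_of_mem_diff_closedNbhd_twinsIn (hR : R.Finite) (hu : u ∈ R)
    (hmin : ∀ v ∈ R, {x ∈ R | G.Adj u x}.ncard ≤ {x ∈ R | G.Adj v x}.ncard)
    {v : V} (hv : v ∈ R \ closedNbhd G (twinsIn G R u)) :
    ∃ w ∈ R \ closedNbhd G (twinsIn G R u), G.Adj v w := by
  by_contra! hisol
  have hsub : {x ∈ R | G.Adj v x} ⊆ {x ∈ R | G.Adj u x} := by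
    rintro x ⟨hxR, hvx⟩
    have hxN : x ∈ closedNbhd G (twinsIn G R u) := by
      by_contra hxN
      exact hisol x ⟨hxR, hxN⟩ hvx
    rcases (inter_closedNbhd_twinsIn hu).subset ⟨hxR, hxN⟩ with hxC | hxu
    · exact absurd hvx (not_adj_of_notMem_closedNbhd hv.2 hxC)
    · exact hxu
  have heq := eq_of_subset_of_ncard_le hsub (hmin v hv.1) (hR.subset fun _ hx => hx.1)
  refine hv.2 (Or.inl ⟨hv.1, fun x hxR => ?_⟩)
  simpa [hxR] using congrArg (x ∈ ·) heq

theorem WellCoveredOn.two_mul_ncard_le (hwc : WellCoveredOn G R) (hR : R.Finite)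
    (hiso : ∀ v ∈ R, ∃ w ∈ R, G.Adj v w) (hs : IsMaxIndepIn G R s) :
    2 * s.ncard ≤ R.ncard := by
  induction hn : R.ncard using Nat.strong_induction_on generalizing R s with
  | _ n ih =>
  rcases R.eq_empty_or_nonempty with rfl | hne
  · simp [eq_empty_of_subset_empty hs.subset]
  obtain ⟨u, hu, hmin⟩ := exists_min_image R (fun v => {x ∈ R | G.Adj v x}.ncard) hR hne
  obtain ⟨y, hy, huy⟩ := hiso u hu
  have hCR : twinsIn G R u ⊆ R := fun _ hw => hw.1
  obtain ⟨K, -, hK⟩ := isIndep_empty.exists_isMaxIndepIn hR.sdiff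
    (empty_subset (R \ closedNbhd G (twinsIn G R u)))
  have hcount := ncard_eq_ncard_diff_closedNbhd_twinsIn (G := G) hR hu
  have hC : 0 < (twinsIn G R u).ncard := (ncard_pos (hR.subset hCR)).2 ⟨u, self_mem_twinsIn hu⟩
  have hK2 : 2 * K.ncard ≤ (R \ closedNbhd G (twinsIn G R u)).ncard :=
    ih _ (by omega) (hwc.diff_closedNbhd hR hCR isIndep_twinsIn) hR.sdiff
      (fun _ hv => exists_adj_of_mem_diff_closedNbhd_twinsIn hR hu hmin hv) hK rfl
  have hsK : s.ncard = K.ncard + (twinsIn G R u).ncard :=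
    (hwc s _ hs (hK.union_of_diff_closedNbhd hCR isIndep_twinsIn)).trans
      (hK.ncard_union_of_diff_closedNbhd hR hCR)
  have hCN := hwc.ncard_twinsIn_le hR hu hy huy
  omega

theorem WellCovered.wellCoveredOn_univ (hwc : WellCovered G) : WellCoveredOn G univ :=
  fun s t hs ht => hwc s t (isMaxIndepIn_univ_iff.1 hs) (isMaxIndepIn_univ_iff.1 ht)

theorem WellCovered.indepNum_le_ncard [Finite V] (hwc : WellCovered G) (hM : IsMaxIndep G M) :
    indepNum G ≤ M.ncard := by
  refine csSup_le ⟨0, ∅, isIndep_empty, ncard_empty V⟩ ?_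
  rintro _ ⟨t, ht, rfl⟩
  exact hwc.wellCoveredOn_univ.ncard_le finite_univ (subset_univ t) ht
    (isMaxIndepIn_univ_iff.2 hM)

end

theorem stmt8 {V : Type*} [Fintype V] (G : SimpleGraph V)
    (h0 : NoIsolated G) (hwc : WellCovered G) :
    2 * indepNum G ≤ Fintype.card V := by
  obtain ⟨M, -, hM⟩ := isIndep_empty.exists_isMaxIndepIn Set.finite_univ
    (Set.empty_subset (Set.univ : Set V))
  calc 2 * indepNum G
      ≤ 2 * M.ncard := Nat.mul_le_mul_left 2 (hwc.indepNum_le_ncard (isMaxIndepIn_univ_iff.1 hM))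
    _ ≤ (Set.univ : Set V).ncard := hwc.wellCoveredOn_univ.two_mul_ncard_le Set.finite_univ
        (fun v _ => (h0 v).imp fun w hvw => ⟨Set.mem_univ w, hvw⟩) hM
    _ = Fintype.card V := by rw [Set.ncard_univ, Nat.card_eq_fintype_card]
end

section
/- Every well-covered bipartite graph with no isolated vertices is very well-covered, i.e., has independence number exactly half its order. -/
/-!
Colour the bipartite graph with two colours. Since no vertex is isolated, every vertex has a
neighbour, necessarily of the other colour, so each colour class dominates the graph and is
therefore a maximal independent set. Well-coveredness makes the two colour classes, which
partition the vertex set, equally large, and makes every maximal independent set, hence the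
independence number, of that common size.
-/

section

variable {V : Type*} {G : SimpleGraph V}

theorem IsIndep.exists_isMaxIndep_superset {s : Set V} (hs : IsIndep G s) :
    ∃ m, s ⊆ m ∧ IsMaxIndep G m := by
  obtain ⟨m, hsm, hm⟩ := zorn_subset_nonempty {t | IsIndep G t}
    (fun c hc hchain _ => ⟨⋃₀ c, fun u ⟨a, ha, hua⟩ v ⟨b, hb, hvb⟩ hadj => by
      rcases hchain.total ha hb with h | h
      · exact hc hb (h hua) hvb hadj
      · exact hc ha hua (h hvb) hadj,
      fun _ => Set.subset_sUnion_of_mem⟩) s hs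
  exact ⟨m, hsm, hm.1, fun t ht hmt => hm.eq_of_subset ht hmt⟩

theorem isMaxIndep_of_forall_exists_adj {s : Set V} (hs : IsIndep G s)
    (hdom : ∀ v ∉ s, ∃ u ∈ s, G.Adj v u) : IsMaxIndep G s := by
  refine ⟨hs, fun t ht hst => hst.antisymm fun v hvt => ?_⟩
  by_contra hvs
  obtain ⟨u, hus, hvu⟩ := hdom v hvs
  exact ht hvt (hst hus) hvu

theorem isIndep_colorClass {α : Type*} (C : G.Coloring α) (c : α) :
    IsIndep G (C.colorClass c) :=
  fun _ hu _ hv => C.not_adj_of_mem_colorClass hu hv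

theorem Fin.eq_of_ne_of_ne_two {a b c : Fin 2} (hab : a ≠ b) (hac : a ≠ c) : b = c := by
  omega

theorem NoIsolated.isMaxIndep_colorClass (h0 : NoIsolated G) (C : G.Coloring (Fin 2))
    (c : Fin 2) : IsMaxIndep G (C.colorClass c) := by
  refine isMaxIndep_of_forall_exists_adj (isIndep_colorClass C c) fun v hv => ?_
  obtain ⟨u, hvu⟩ := h0 v
  exact ⟨u, Fin.eq_of_ne_of_ne_two (C.valid hvu) hv, hvu⟩

theorem SimpleGraph.Coloring.colorClass_one_eq_compl (C : G.Coloring (Fin 2)) :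
    C.colorClass 1 = (C.colorClass 0)ᶜ := by
  ext v
  simp only [SimpleGraph.Coloring.colorClass, Set.mem_ofPred_eq, Set.mem_compl_iff]
  omega

theorem WellCovered.indepNum_eq_ncard [Finite V] (hwc : WellCovered G) {s : Set V}
    (hs : IsMaxIndep G s) : indepNum G = s.ncard := by
  refine IsGreatest.csSup_eq ⟨⟨s, hs.1, rfl⟩, ?_⟩
  rintro n ⟨t, ht, rfl⟩
  obtain ⟨m, htm, hm⟩ := ht.exists_isMaxIndep_superset
  exact (Set.ncard_le_ncard htm).trans (hwc m s hm hs).le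

end

theorem stmt9 {V : Type*} [Fintype V] (G : SimpleGraph V)
    (hbip : G.Colorable 2) (h0 : NoIsolated G) (hwc : WellCovered G) :
    2 * indepNum G = Fintype.card V := by
  obtain ⟨C⟩ := hbip
  have hA := h0.isMaxIndep_colorClass C 0
  have hAc : IsMaxIndep G (C.colorClass 0)ᶜ :=
    C.colorClass_one_eq_compl ▸ h0.isMaxIndep_colorClass C 1
  have hsum : (C.colorClass 0).ncard + (C.colorClass 0)ᶜ.ncard = Fintype.card V :=
    (Set.ncard_add_ncard_compl _).trans Nat.card_eq_fintype_card
  rw [hwc.indepNum_eq_ncard hA, two_mul]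
  nth_rw 2 [hwc _ _ hA hAc]
  exact hsum
end
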